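/- arXiv:2401.17521 — 6 statements merged into one kernel-verified Lean document; each statement's English description precedes it below -/
import Mathlib

section
/- Let a > 0, b ≥ 0, d > 0 and κ > 1 be real numbers such that a > (2b/d)^{1/κ}. Suppose that for some T > 0 the function y : [0,T) → ℝ is continuous, nonnegative, and satisfies y(t) ≥ a − b·t + d·∫₀ᵗ y(s)^κ ds for all t ∈ (0,T). Then necessarily T ≤ 2/((κ−1)·a^{κ−1}·d). -/
open Set intervalIntegral Topology

/-! With `z t = a - b t + d ∫₀ᵗ y^κ` we have `y ≥ z` and `z' = -b + d y^κ`. Since `d a^κ > 2b`,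
`z` is increasing whenever it equals `a`, so it never drops below `z 0 = a`; then
`z' ≥ -b + d z^κ ≥ (d/2) z^κ`, i.e. `(z^(1-κ))' ≤ -(κ-1) d/2`. As `z^(1-κ)` stays positive and
starts at `a^(1-κ)`, the interval of existence has length less than `a^(1-κ) / ((κ-1) d/2)`. -/

theorem hasDerivWithinAt_integral_Ici_of_continuousOn {f : ℝ → ℝ} {u v x : ℝ}
    (hf : ContinuousOn f (Icc u v)) (hx : x ∈ Ico u v) :
    HasDerivWithinAt (fun t => ∫ s in u..t, f s) (f x) (Ici x) x := by
  have hmem : Icc u v ∈ 𝓝[>] x :=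
    ordConnected_Icc.mem_nhdsGT (Ico_subset_Icc_self hx) (right_mem_Icc.2 (hx.1.trans hx.2.le))
      hx.2
  refine integral_hasDerivWithinAt_right ?_ ⟨_, hmem, hf.aestronglyMeasurable measurableSet_Icc⟩
    ((hf x (Ico_subset_Icc_self hx)).mono_of_mem_nhdsWithin hmem)
  exact (hf.mono (by rw [uIcc_of_le hx.1]; exact Icc_subset_Icc_right hx.2.le)).intervalIntegrable

theorem le_image_of_deriv_right_pos_of_eq {z z' : ℝ → ℝ} {u v c : ℝ}
    (hz : ContinuousOn z (Icc u v)) (hz' : ∀ x ∈ Ico u v, HasDerivWithinAt z (z' x) (Ici x) x)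
    (hu : c ≤ z u) (hpos : ∀ x ∈ Ico u v, z x = c → 0 < z' x) : ∀ x ∈ Icc u v, c ≤ z x := by
  intro x hx
  have := image_le_of_deriv_right_lt_deriv_boundary (f := fun x => -z x) (B := fun _ => -c)
    hz.neg (fun x hx => (hz' x hx).neg) (neg_le_neg hu) (fun _ => hasDerivAt_const _ _)
    (fun x hx hzx => neg_neg_of_pos (hpos x hx (neg_inj.1 hzx))) hx
  exact neg_le_neg_iff.1 this

theorem mul_sub_lt_rpow_one_sub_of_le_deriv_right {z z' : ℝ → ℝ} {u v κ c : ℝ} (hκ : 1 < κ)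
    (huv : u ≤ v) (hz : ContinuousOn z (Icc u v))
    (hz' : ∀ x ∈ Ico u v, HasDerivWithinAt z (z' x) (Ici x) x)
    (hz_pos : ∀ x ∈ Icc u v, 0 < z x) (hbound : ∀ x ∈ Ico u v, c * z x ^ κ ≤ z' x) :
    (κ - 1) * c * (v - u) < z u ^ (1 - κ) := by
  have hB : ∀ x, HasDerivAt (fun x => z u ^ (1 - κ) - (κ - 1) * c * (x - u)) (-((κ - 1) * c)) x :=
    fun x => by simpa using (((hasDerivAt_id x).sub_const u).const_mul ((κ - 1) * c)).const_sub _
  have hderiv_bound : ∀ x ∈ Ico u v, z' x * (1 - κ) * z x ^ (1 - κ - 1) ≤ -((κ - 1) * c) := by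
    intro x hx
    have hzx := hz_pos x (Ico_subset_Icc_self hx)
    have hc : c ≤ z' x * z x ^ (1 - κ - 1) := calc
      c = c * z x ^ κ * z x ^ (-κ) := by
        rw [mul_assoc, ← Real.rpow_add hzx, add_neg_cancel, Real.rpow_zero, mul_one]
      _ ≤ z' x * z x ^ (1 - κ - 1) := by
        rw [show 1 - κ - 1 = -κ by ring]
        exact mul_le_mul_of_nonneg_right (hbound x hx) (Real.rpow_nonneg hzx.le _)
    nlinarith
  have hle := image_le_of_deriv_right_le_deriv_boundary (f := fun x => z x ^ (1 - κ))
    (hz.rpow_const fun x hx => Or.inl (hz_pos x hx).ne')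
    (fun x hx => (hz' x hx).rpow_const (Or.inl (hz_pos x (Ico_subset_Icc_self hx)).ne'))
    (by simp) (fun x _ => (hB x).continuousAt.continuousWithinAt)
    (fun x _ => (hB x).hasDerivWithinAt) hderiv_bound (right_mem_Icc.2 huv)
  have := Real.rpow_pos_of_pos (hz_pos v (right_mem_Icc.2 huv)) (1 - κ)
  linarith

theorem two_mul_lt_mul_rpow_of_rpow_one_div_lt {a b d κ : ℝ} (ha : 0 ≤ a) (hb : 0 ≤ b)
    (hd : 0 < d) (hκ : 0 < κ) (h : (2 * b / d) ^ (1 / κ) < a) : 2 * b < d * a ^ κ := by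
  rw [one_div, Real.rpow_inv_lt_iff_of_pos (by positivity) ha hκ, div_lt_iff₀ hd] at h
  linarith

theorem mul_lt_rpow_one_sub_of_le_integral_rpow {a b d κ T t : ℝ} {y : ℝ → ℝ} (ha : 0 < a)
    (hd : 0 < d) (hκ : 1 < κ) (hba : 2 * b < d * a ^ κ) (hy_cont : ContinuousOn y (Ico 0 T))
    (hy_ineq : ∀ t ∈ Ioo (0 : ℝ) T, y t ≥ a - b * t + d * ∫ s in (0 : ℝ)..t, y s ^ κ)
    (ht : t ∈ Ioo 0 T) :
    (κ - 1) * (d / 2) * t < a ^ (1 - κ) := by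
  set z : ℝ → ℝ := fun t => a - b * t + d * ∫ s in (0 : ℝ)..t, y s ^ κ with hz_def
  have hy_cont' : ContinuousOn y (Icc 0 t) := hy_cont.mono (Icc_subset_Ico_right ht.2)
  have hyκ_cont : ContinuousOn (fun s => y s ^ κ) (Icc 0 t) :=
    hy_cont'.rpow_const fun _ _ => Or.inr (by linarith)
  have hz_cont : ContinuousOn z (Icc 0 t) := by
    refine (continuousOn_const.sub (continuousOn_const.mul continuousOn_id)).add
      (continuousOn_const.mul ?_)
    rw [← uIcc_of_le ht.1.le] at hyκ_cont ⊢
    exact continuousOn_primitive_interval hyκ_cont.integrableOn_Icc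
  have hz' : ∀ x ∈ Ico 0 t, HasDerivWithinAt z (-b + d * y x ^ κ) (Ici x) x := fun x hx => by
    refine ((((hasDerivWithinAt_id x _).const_mul b).const_sub a).add
      ((hasDerivWithinAt_integral_Ici_of_continuousOn hyκ_cont hx).const_mul d)).congr_deriv ?_
    simp
  have hz0 : z 0 = a := by simp [hz_def]
  have hzy : ∀ x ∈ Icc 0 t, z x ≤ y x := by
    rw [← closure_Ioo ht.1.ne]
    refine le_on_closure (fun x hx => hy_ineq x ⟨hx.1, hx.2.trans ht.2⟩) ?_ ?_
    all_goals rwa [closure_Ioo ht.1.ne]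
  have hza : ∀ x ∈ Icc 0 t, a ≤ z x := by
    refine le_image_of_deriv_right_pos_of_eq hz_cont hz' hz0.ge fun x hx hzx => ?_
    have : a ^ κ ≤ y x ^ κ :=
      Real.rpow_le_rpow ha.le (hzx ▸ hzy x (Ico_subset_Icc_self hx)) (by linarith)
    nlinarith [Real.rpow_pos_of_pos ha κ]
  have hbound : ∀ x ∈ Ico 0 t, d / 2 * z x ^ κ ≤ -b + d * y x ^ κ := by
    intro x hx
    have hx' := Ico_subset_Icc_self hx
    have h1 : a ^ κ ≤ z x ^ κ := Real.rpow_le_rpow ha.le (hza x hx') (by linarith)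
    have h2 : z x ^ κ ≤ y x ^ κ :=
      Real.rpow_le_rpow (ha.le.trans (hza x hx')) (hzy x hx') (by linarith)
    nlinarith
  simpa [hz0] using mul_sub_lt_rpow_one_sub_of_le_deriv_right hκ ht.1.le hz_cont hz'
    (fun x hx => ha.trans_le (hza x hx)) hbound

theorem stmt_0_general (a b d κ : ℝ) (ha : 0 < a) (hb : 0 ≤ b) (hd : 0 < d) (hκ : 1 < κ)
    (hcond : a > (2 * b / d) ^ (1 / κ)) (T : ℝ) (y : ℝ → ℝ)
    (hy_cont : ContinuousOn y (Set.Ico 0 T))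
    (hy_ineq : ∀ t ∈ Set.Ioo (0 : ℝ) T,
      y t ≥ a - b * t + d * ∫ s in (0 : ℝ)..t, y s ^ κ) :
    T ≤ 2 / ((κ - 1) * a ^ (κ - 1) * d) := by
  have hba := two_mul_lt_mul_rpow_of_rpow_one_div_lt ha.le hb hd (by linarith) hcond
  have hκ1 : 0 < κ - 1 := by linarith
  have hpow : 0 < a ^ (κ - 1) := Real.rpow_pos_of_pos ha _
  refine le_of_forall_lt fun t htT => ?_
  rcases le_or_gt t 0 with ht | ht
  · exact ht.trans_lt (by positivity)
  have h := mul_lt_rpow_one_sub_of_le_integral_rpow ha hd hκ hba hy_cont hy_ineq ⟨ht, htT⟩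
  have hinv : a ^ (1 - κ) * a ^ (κ - 1) = 1 := by rw [← Real.rpow_add ha]; simp
  rw [lt_div_iff₀ (by positivity)]
  linear_combination 2 * mul_lt_mul_of_pos_right h hpow + 2 * hinv

theorem stmt_0 (a b d κ : ℝ) (ha : 0 < a) (hb : 0 ≤ b) (hd : 0 < d) (hκ : 1 < κ)
    (hcond : a > (2 * b / d) ^ (1 / κ)) (T : ℝ) (hT : 0 < T) (y : ℝ → ℝ)
    (hy_cont : ContinuousOn y (Set.Ico 0 T))
    (hy_nonneg : ∀ t ∈ Set.Ico (0 : ℝ) T, 0 ≤ y t)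
    (hy_ineq : ∀ t ∈ Set.Ioo (0 : ℝ) T,
      y t ≥ a - b * t + d * ∫ s in (0 : ℝ)..t, y s ^ κ) :
    T ≤ 2 / ((κ - 1) * a ^ (κ - 1) * d) :=
  stmt_0_general a b d κ ha hb hd hκ hcond T y hy_cont hy_ineq
end

section
/- Let a > 0, b ≥ 0, d > 0 and κ > 1 be real numbers such that a > (2b/d)^{1/κ}. Then there exists no continuous nonnegative function y : [0,∞) → ℝ satisfying y(t) ≥ a − b·t + d·∫₀ᵗ y(s)^κ ds for all t > 0. -/
/-!
Put `G t = a - b t + d ∫₀ᵗ y^κ`, so that `y ≥ G` and `G' = -b + d y^κ ≥ -b + d G^κ`.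
Since `b < d a^κ`, `G` can never come back down to the level `a`, so `G ≥ a`; then
`b ≤ (b / a^κ) G^κ` turns the inequality into `G' ≥ e G^κ` with `e = d - b / a^κ > 0`.
A positive supersolution of `G' = e G^κ` with `κ > 1` blows up before time
`G(0)^(1-κ) / ((κ - 1) e)`, because `G^(1-κ) + (κ - 1) e t` is nonincreasing.
-/

open Set intervalIntegral

lemma le_of_eq_imp_deriv_pos {G G' : ℝ → ℝ} {a t₀ : ℝ}
    (hG : ∀ t, t₀ ≤ t → HasDerivAt G (G' t) t) (h₀ : a ≤ G t₀)
    (hpos : ∀ t, t₀ ≤ t → G t = a → 0 < G' t) {t : ℝ} (ht : t₀ ≤ t) : a ≤ G t :=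
  image_le_of_deriv_right_lt_deriv_boundary' (f' := fun _ => 0) continuousOn_const
    (fun _ _ => hasDerivWithinAt_const _ _ _) h₀
    (fun s hs => (hG s hs.1).continuousAt.continuousWithinAt)
    (fun s hs => (hG s hs.1).hasDerivWithinAt) (fun s hs hs' => hpos s hs.1 hs'.symm) ⟨ht, le_rfl⟩

lemma antitoneOn_rpow_one_sub_add_mul {G G' : ℝ → ℝ} {e κ : ℝ} (hκ : 1 < κ)
    (hG : ∀ t, 0 ≤ t → HasDerivAt G (G' t) t) (hpos : ∀ t, 0 ≤ t → 0 < G t)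
    (hineq : ∀ t, 0 ≤ t → e * G t ^ κ ≤ G' t) :
    AntitoneOn (fun t => G t ^ (1 - κ) + (κ - 1) * e * t) (Ici 0) := by
  have hderiv : ∀ t, 0 ≤ t → HasDerivAt (fun t => G t ^ (1 - κ) + (κ - 1) * e * t)
      (G' t * (1 - κ) * G t ^ (1 - κ - 1) + (κ - 1) * e) t := fun t ht =>
    ((hG t ht).rpow_const (Or.inl (hpos t ht).ne')).add
      ((hasDerivAt_id t).const_mul ((κ - 1) * e) |>.congr_deriv (mul_one _))
  refine antitoneOn_of_deriv_nonpos (convex_Ici 0)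
    (fun t ht => (hderiv t ht).continuousAt.continuousWithinAt)
    (fun t ht => (hderiv t (interior_subset ht)).differentiableAt.differentiableWithinAt)
    fun t ht => ?_
  have ht : 0 ≤ t := interior_subset ht
  rw [(hderiv t ht).deriv, show 1 - κ - 1 = -κ by ring]
  have hGt := hpos t ht
  have hcancel : G t ^ κ * G t ^ (-κ) = 1 := by
    rw [← Real.rpow_add hGt, add_neg_cancel, Real.rpow_zero]
  have hneg : (1 - κ) * G t ^ (-κ) ≤ 0 :=
    mul_nonpos_of_nonpos_of_nonneg (by linarith) (Real.rpow_pos_of_pos hGt _).le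
  calc G' t * (1 - κ) * G t ^ (-κ) + (κ - 1) * e
      = G' t * ((1 - κ) * G t ^ (-κ)) + (κ - 1) * e := by ring
    _ ≤ e * G t ^ κ * ((1 - κ) * G t ^ (-κ)) + (κ - 1) * e := by
        linarith [mul_le_mul_of_nonpos_right (hineq t ht) hneg]
    _ = 0 := by linear_combination (1 - κ) * e * hcancel

lemma false_of_deriv_ge_mul_rpow {G G' : ℝ → ℝ} {e κ : ℝ} (he : 0 < e) (hκ : 1 < κ)
    (hG : ∀ t, 0 ≤ t → HasDerivAt G (G' t) t) (hpos : ∀ t, 0 ≤ t → 0 < G t)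
    (hineq : ∀ t, 0 ≤ t → e * G t ^ κ ≤ G' t) : False := by
  have hc : 0 < (κ - 1) * e := mul_pos (by linarith) he
  set T := G 0 ^ (1 - κ) / ((κ - 1) * e)
  have hT : 0 ≤ T := div_nonneg (Real.rpow_pos_of_pos (hpos 0 le_rfl) _).le hc.le
  have hle := antitoneOn_rpow_one_sub_add_mul hκ hG hpos hineq self_mem_Ici hT hT
  have hcT : (κ - 1) * e * T = G 0 ^ (1 - κ) := mul_div_cancel₀ _ hc.ne'
  have hGT := Real.rpow_pos_of_pos (hpos T hT) (1 - κ)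
  simp only [mul_zero, add_zero, hcT] at hle
  linarith

lemma false_of_continuous_integral_supersolution {z : ℝ → ℝ} {a b d κ : ℝ}
    (hz : Continuous z) (ha : 0 < a) (hb : 0 ≤ b) (hd : 0 < d) (hκ : 1 < κ)
    (hba : b < d * a ^ κ) (h : ∀ t > 0, a - b * t + d * ∫ s in (0 : ℝ)..t, z s ^ κ ≤ z t) :
    False := by
  set G : ℝ → ℝ := fun t => a - b * t + d * ∫ s in (0 : ℝ)..t, z s ^ κ
  have hκ₀ : 0 ≤ κ := by linarith
  have hzκ : Continuous fun s => z s ^ κ := hz.rpow_const fun _ => Or.inr hκ₀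
  have hG : ∀ t, HasDerivAt G (-b + d * z t ^ κ) t := fun t =>
    (((hasDerivAt_id t).const_mul b).const_sub a |>.add
      ((integral_hasDerivAt_right (hzκ.intervalIntegrable 0 t)
        (hzκ.stronglyMeasurableAtFilter _ _) hzκ.continuousAt).const_mul d)).congr_deriv
      (by rw [mul_one])
  have hGz : ∀ t, 0 ≤ t → G t ≤ z t := fun t ht => by
    have hclosed : IsClosed {t | G t ≤ z t} :=
      isClosed_le (continuous_iff_continuousAt.2 fun t => (hG t).continuousAt) hz
    exact hclosed.closure_subset_iff.2 h (closure_Ioi (0 : ℝ) ▸ ht)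
  have haG : ∀ t, 0 ≤ t → a ≤ G t := fun t ht =>
    le_of_eq_imp_deriv_pos (fun t _ => hG t) (by simp [G]) (fun s hs hGs => by
      have := Real.rpow_le_rpow ha.le (hGs ▸ hGz s hs) hκ₀
      linarith [mul_le_mul_of_nonneg_left this hd.le]) ht
  have haκ : 0 < a ^ κ := Real.rpow_pos_of_pos ha κ
  refine false_of_deriv_ge_mul_rpow (e := d - b / a ^ κ) (G := G) ?_ hκ (fun t _ => hG t)
    (fun t ht => ha.trans_le (haG t ht)) fun t ht => ?_
  · rwa [sub_pos, div_lt_iff₀ haκ]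
  have hGκ : a ^ κ ≤ G t ^ κ := Real.rpow_le_rpow ha.le (haG t ht) hκ₀
  have hzκt : G t ^ κ ≤ z t ^ κ :=
    Real.rpow_le_rpow (ha.le.trans (haG t ht)) (hGz t ht) hκ₀
  calc (d - b / a ^ κ) * G t ^ κ = d * G t ^ κ - b / a ^ κ * G t ^ κ := by ring
    _ ≤ d * G t ^ κ - b / a ^ κ * a ^ κ := by gcongr
    _ = d * G t ^ κ - b := by rw [div_mul_cancel₀ _ haκ.ne']
    _ ≤ -b + d * z t ^ κ := by linarith [mul_le_mul_of_nonneg_left hzκt hd.le]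

theorem stmt_1 (a b d κ : ℝ) (ha : 0 < a) (hb : 0 ≤ b) (hd : 0 < d) (hκ : 1 < κ)
    (hcond : a > (2 * b / d) ^ (1 / κ)) :
    ¬ ∃ y : ℝ → ℝ, ContinuousOn y (Set.Ici 0) ∧ (∀ t ∈ Set.Ici (0 : ℝ), 0 ≤ y t) ∧
      (∀ t > (0 : ℝ), y t ≥ a - b * t + d * ∫ s in (0 : ℝ)..t, y s ^ κ) := by
  rintro ⟨y, hy, -, hsup⟩
  have hba : b < d * a ^ κ := by
    rw [one_div, gt_iff_lt, Real.rpow_inv_lt_iff_of_pos (by positivity) ha.le (by linarith),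
      div_lt_iff₀ hd] at hcond
    linarith
  refine false_of_continuous_integral_supersolution (z := fun t => y (max t 0))
    (hy.comp_continuous (continuous_id.max continuous_const) fun t => le_max_right t 0)
    ha hb hd hκ hba fun t ht => ?_
  have hyz : EqOn (fun s => y s ^ κ) (fun s => y (max s 0) ^ κ) (uIcc 0 t) := fun s hs => by
    simp only [max_eq_left (uIcc_of_le ht.le ▸ hs).1]
  simpa only [max_eq_left ht.le, integral_congr hyz] using hsup t ht
end

section
/- Let T > 0, let h : [0,T) → ℝ be continuous and nonnegative, and let y : [0,T) → ℝ be continuous, nonnegative, and differentiable on (0,T) with y'(t) ≤ h(t)·(e + y(t))·log(e + y(t)) for all t ∈ (0,T). Then for every t ∈ [0,T) one has e + y(t) ≤ exp( log(e + y(0)) · exp(∫₀ᵗ h(s) ds) ). -/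
open Set Real intervalIntegral

theorem stmt_2 (T : ℝ) (hT : 0 < T) (h y : ℝ → ℝ)
    (hh_cont : ContinuousOn h (Set.Ico 0 T))
    (hh_nonneg : ∀ t ∈ Set.Ico (0 : ℝ) T, 0 ≤ h t)
    (hy_cont : ContinuousOn y (Set.Ico 0 T))
    (hy_nonneg : ∀ t ∈ Set.Ico (0 : ℝ) T, 0 ≤ y t)
    (hy_diff : ∀ t ∈ Set.Ioo (0 : ℝ) T, DifferentiableAt ℝ y t)
    (hy_ineq : ∀ t ∈ Set.Ioo (0 : ℝ) T,
      deriv y t ≤ h t * (Real.exp 1 + y t) * Real.log (Real.exp 1 + y t)) :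
    ∀ t ∈ Set.Ico (0 : ℝ) T,
      Real.exp 1 + y t ≤
        Real.exp (Real.log (Real.exp 1 + y 0) * Real.exp (∫ s in (0 : ℝ)..t, h s)) := by
  have hpos : ∀ x ∈ Set.Ico (0:ℝ) T, 0 < Real.exp 1 + y x := fun x hx =>
    lt_of_lt_of_le (Real.exp_pos 1) (le_add_of_nonneg_right (hy_nonneg x hx))
  have hlog1 : ∀ x ∈ Set.Ico (0:ℝ) T, 1 ≤ Real.log (Real.exp 1 + y x) := by
    intro x hx
    calc (1:ℝ) = Real.log (Real.exp 1) := (Real.log_exp 1).symm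
      _ ≤ _ := Real.log_le_log (Real.exp_pos 1) (le_add_of_nonneg_right (hy_nonneg x hx))
  intro t ht
  obtain ⟨ht0, htT⟩ := ht
  have hsub : Set.Icc (0:ℝ) t ⊆ Set.Ico 0 T := fun x hx => ⟨hx.1, lt_of_le_of_lt hx.2 htT⟩
  set H : ℝ → ℝ := fun x => ∫ s in (0:ℝ)..x, h s with hH
  set F : ℝ → ℝ := fun x => Real.log (Real.log (Real.exp 1 + y x)) - H x with hF
  -- integrability
  have hint : MeasureTheory.IntegrableOn h (Set.Icc 0 t) :=
    (hh_cont.mono hsub).integrableOn_compact isCompact_Icc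
  -- continuity of F on Icc 0 t
  have hHcont : ContinuousOn H (Set.Icc 0 t) := by
    have := intervalIntegral.continuousOn_primitive_interval
      (f := h) (μ := MeasureTheory.volume) (a := (0:ℝ)) (b := t)
      (by rwa [Set.uIcc_of_le ht0])
    rwa [Set.uIcc_of_le ht0] at this
  have hFcont : ContinuousOn F (Set.Icc 0 t) := by
    apply ContinuousOn.sub _ hHcont
    apply ContinuousOn.log
    apply ContinuousOn.log
    · exact (continuousOn_const.add (hy_cont.mono hsub))
    · intro x hx; exact ne_of_gt (hpos x (hsub hx))
    · intro x hx
      exact ne_of_gt (lt_of_lt_of_le one_pos (hlog1 x (hsub hx)))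
  -- derivative of F on Ioo 0 t
  have hF' : ∀ x ∈ Set.Ioo (0:ℝ) t, HasDerivAt F
      ((deriv y x / (Real.exp 1 + y x)) / Real.log (Real.exp 1 + y x) - h x) x := by
    intro x hx
    have hxT : x ∈ Set.Ioo (0:ℝ) T := ⟨hx.1, lt_trans hx.2 htT⟩
    have hxIco : x ∈ Set.Ico (0:ℝ) T := ⟨le_of_lt hx.1, hxT.2⟩
    have h1 : HasDerivAt (fun x => Real.exp 1 + y x) (deriv y x) x :=
      ((hy_diff x hxT).hasDerivAt).const_add _
    have h2 := h1.log (ne_of_gt (hpos x hxIco))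
    have h3 := h2.log (ne_of_gt (lt_of_lt_of_le one_pos (hlog1 x hxIco)))
    have hHder : HasDerivAt H (h x) x := by
      apply intervalIntegral.integral_hasDerivAt_right
      · apply ContinuousOn.intervalIntegrable
        apply hh_cont.mono
        rw [Set.uIcc_of_le (le_of_lt hx.1)]
        exact fun z hz => hsub ⟨hz.1, le_trans hz.2 (le_of_lt hx.2)⟩
      · exact (hh_cont.mono (fun z hz => ⟨le_of_lt hz.1, hz.2⟩ : Set.Ioo (0:ℝ) T ⊆ Set.Ico 0 T)).stronglyMeasurableAtFilter
          isOpen_Ioo x hxT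
      · exact hh_cont.continuousAt (Ico_mem_nhds hxT.1 hxT.2)
    exact h3.sub hHder
  -- F is antitone on Icc 0 t
  have hanti : AntitoneOn F (Set.Icc 0 t) := by
    apply antitoneOn_of_deriv_nonpos (convex_Icc 0 t) hFcont
    · rw [interior_Icc]
      exact fun x hx => ((hF' x hx).differentiableAt).differentiableWithinAt
    · rw [interior_Icc]
      intro x hx
      rw [(hF' x hx).deriv]
      have hxT : x ∈ Set.Ioo (0:ℝ) T := ⟨hx.1, lt_trans hx.2 htT⟩
      have hxIco : x ∈ Set.Ico (0:ℝ) T := ⟨le_of_lt hx.1, hxT.2⟩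
      have hp : 0 < Real.exp 1 + y x := hpos x hxIco
      have hl : 0 < Real.log (Real.exp 1 + y x) := lt_of_lt_of_le one_pos (hlog1 x hxIco)
      have := hy_ineq x hxT
      rw [sub_nonpos, div_div, div_le_iff₀ (by positivity)]
      calc deriv y x ≤ h x * (Real.exp 1 + y x) * Real.log (Real.exp 1 + y x) := this
        _ = h x * ((Real.exp 1 + y x) * Real.log (Real.exp 1 + y x)) := by ring
  have hFt : F t ≤ F 0 := hanti (Set.left_mem_Icc.2 ht0) (Set.right_mem_Icc.2 ht0) ht0
  have hH0 : H 0 = 0 := intervalIntegral.integral_same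
  have ht_mem : t ∈ Set.Ico (0:ℝ) T := ⟨ht0, htT⟩
  have h0_mem : (0:ℝ) ∈ Set.Ico (0:ℝ) T := ⟨le_refl _, hT⟩
  have key : Real.log (Real.log (Real.exp 1 + y t)) ≤
      Real.log (Real.log (Real.exp 1 + y 0)) + H t := by
    have : F t = Real.log (Real.log (Real.exp 1 + y t)) - H t := rfl
    have h2 : F 0 = Real.log (Real.log (Real.exp 1 + y 0)) := by
      simp [hF, hH0]
    linarith [hFt, this ▸ hFt]
  have hlt : 0 < Real.log (Real.exp 1 + y t) := lt_of_lt_of_le one_pos (hlog1 t ht_mem)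
  have hl0 : 0 < Real.log (Real.exp 1 + y 0) := lt_of_lt_of_le one_pos (hlog1 0 h0_mem)
  calc Real.exp 1 + y t = Real.exp (Real.log (Real.exp 1 + y t)) :=
        (Real.exp_log (hpos t ht_mem)).symm
    _ ≤ Real.exp (Real.log (Real.exp 1 + y 0) * Real.exp (H t)) := by
        apply Real.exp_le_exp.2
        calc Real.log (Real.exp 1 + y t)
            = Real.exp (Real.log (Real.log (Real.exp 1 + y t))) := (Real.exp_log hlt).symm
          _ ≤ Real.exp (Real.log (Real.log (Real.exp 1 + y 0)) + H t) := Real.exp_le_exp.2 key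
          _ = Real.log (Real.exp 1 + y 0) * Real.exp (H t) := by
              rw [Real.exp_add, Real.exp_log hl0]
end

section
/- Let μ₁, μ₂ > 0 be real numbers. There exists p > 1 such that, with the parameter values d₃ = χ₁ = χ₂ = α = β = 1 and a₁ = a₂ = 1, the disjunction (i)_p ∨ (ii)_p ∨ (iii)_p ∨ (iv)_p holds, if and only if max{μ₁, μ₂} < 1. -/
/-- Condition (i)_p of Theorem 1.1. -/
def condIp (p d₃ χ₁ χ₂ μ₁ μ₂ a₁ a₂ α β : ℝ) : Prop :=
  χ₁ > p * d₃ * μ₁ / (p - 1) * max (1 / α) (a₁ / β) ∧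
  χ₂ > p * d₃ * μ₂ / (p - 1) * max (1 / β) (a₂ / α)

/-- Condition (ii)_p of Theorem 1.1. -/
def condIIp (p d₃ χ₁ χ₂ μ₁ μ₂ a₁ a₂ α β : ℝ) : Prop :=
  χ₁ > max ((d₃ * p * (p + 1) * μ₁ + d₃ * p * a₂ * μ₂ - χ₂ * α * (p - 1)) / (α * (p ^ 2 - 1)))
           (d₃ * p * a₁ * μ₁ / (β * (p - 1))) ∧
  (d₃ * p * (p + 1) * μ₂ + d₃ * p ^ 2 * a₂ * μ₂) / (α * p * (p - 1) + β * (p ^ 2 - 1)) < χ₂ ∧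
  χ₂ ≤ d₃ * p * a₂ * μ₂ / (α * (p - 1))

/-- Condition (iii)_p of Theorem 1.1. -/
def condIIIp (p d₃ χ₁ χ₂ μ₁ μ₂ a₁ a₂ α β : ℝ) : Prop :=
  (d₃ * p * (p + 1) * μ₁ + d₃ * p ^ 2 * a₁ * μ₁) / (α * (p ^ 2 - 1) + β * p * (p - 1)) < χ₁ ∧
  χ₁ ≤ d₃ * p * a₁ * μ₁ / (β * (p - 1)) ∧
  χ₂ > max ((d₃ * p * a₁ * μ₁ + d₃ * p * (p + 1) * μ₂ - χ₁ * β * (p - 1)) / (β * (p ^ 2 - 1)))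
           (d₃ * p * a₂ * μ₂ / (α * (p - 1)))

/-- Condition (iv)_p of Theorem 1.1. -/
def condIVp (p d₃ χ₁ χ₂ μ₁ μ₂ a₁ a₂ α β : ℝ) : Prop :=
  (d₃ * p * (p + 1) * μ₁ + d₃ * p ^ 2 * a₁ * μ₁ + d₃ * p * a₂ * μ₂ - χ₂ * α * (p - 1)) /
      (α * (p ^ 2 - 1) + β * p * (p - 1)) < χ₁ ∧
  χ₁ ≤ d₃ * p * a₁ * μ₁ / (β * (p - 1)) ∧
  (d₃ * p * (p + 1) * μ₂ + d₃ * p * a₁ * μ₁ + d₃ * p ^ 2 * a₂ * μ₂ - χ₁ * β * (p - 1)) /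
      (α * p * (p - 1) + β * (p ^ 2 - 1)) < χ₂ ∧
  χ₂ ≤ d₃ * p * a₂ * μ₂ / (α * (p - 1))

theorem stmt_7 (μ₁ μ₂ : ℝ) (hμ₁ : 0 < μ₁) (hμ₂ : 0 < μ₂) :
    (∃ p > (1 : ℝ),
      condIp p 1 1 1 μ₁ μ₂ 1 1 1 1 ∨ condIIp p 1 1 1 μ₁ μ₂ 1 1 1 1 ∨
      condIIIp p 1 1 1 μ₁ μ₂ 1 1 1 1 ∨ condIVp p 1 1 1 μ₁ μ₂ 1 1 1 1) ↔
    max μ₁ μ₂ < 1 := by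
  constructor
  · rintro ⟨p, hp, h | h | h | h⟩ <;>
      [skip; exfalso; exfalso; exfalso] <;>
      simp only [condIp, condIIp, condIIIp, condIVp, gt_iff_lt, max_lt_iff, lt_max_iff] at h <;>
      norm_num at h
    · obtain ⟨h1, h2⟩ := h
      have hp1 : (0:ℝ) < p - 1 := by linarith
      rw [div_lt_one hp1] at h1 h2
      have hpp : (0:ℝ) < p := by linarith
      refine max_lt ?_ ?_ <;> nlinarith
    · obtain ⟨h1, h2, h3⟩ := h
      have hp1 : (0:ℝ) < p - 1 := by linarith
      have hD : (0:ℝ) < p * (p-1) + (p^2 - 1) := by nlinarith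
      rw [div_lt_one hD] at h2
      rw [le_div_iff₀ hp1] at h3
      nlinarith
    · obtain ⟨h1, h2, h3⟩ := h
      have hp1 : (0:ℝ) < p - 1 := by linarith
      have hD : (0:ℝ) < (p^2 - 1) + p * (p-1) := by nlinarith
      rw [div_lt_one hD] at h1
      rw [le_div_iff₀ hp1] at h2
      nlinarith
    · obtain ⟨h1, h2, h3, h4⟩ := h
      have hp1 : (0:ℝ) < p - 1 := by linarith
      have hD : (0:ℝ) < (p^2 - 1) + p * (p-1) := by nlinarith
      have hD' : (0:ℝ) < p * (p-1) + (p^2 - 1) := by nlinarith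
      rw [div_lt_one hD] at h1
      rw [div_lt_one hD'] at h3
      rw [le_div_iff₀ hp1] at h2
      rw [le_div_iff₀ hp1] at h4
      nlinarith
  · intro hm
    have h1 : μ₁ < 1 := lt_of_le_of_lt (le_max_left _ _) hm
    have h2 : μ₂ < 1 := lt_of_le_of_lt (le_max_right _ _) hm
    set m := max μ₁ μ₂ with hmdef
    have hm0 : 0 < m := lt_of_lt_of_le hμ₁ (le_max_left _ _)
    have h1m : 0 < 1 - m := by linarith
    refine ⟨2 / (1 - m), ?_, Or.inl ?_⟩
    · rw [gt_iff_lt, lt_div_iff₀ h1m]; linarith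
    · have hμ₁m : μ₁ ≤ m := le_max_left _ _
      have hμ₂m : μ₂ ≤ m := le_max_right _ _
      have hp1 : (0:ℝ) < 2 / (1 - m) - 1 := by
        rw [sub_pos, lt_div_iff₀ h1m]; linarith
      simp only [condIp, gt_iff_lt]
      norm_num
      constructor <;> rw [div_lt_one hp1] <;>
        · rw [div_mul_eq_mul_div, lt_sub_iff_add_lt, div_add' _ _ _ (ne_of_gt h1m),
            div_lt_div_iff₀ h1m h1m]
          nlinarith
end

section
/- Let χ₁, χ₂ > 0 be real numbers. With the parameter values d₃ = μ₁ = μ₂ = α = β = 1 and a₁ = a₂ = 1, there exists p > 1 such that (i)_p ∨ (ii)_p ∨ (iii)_p ∨ (iv)_p holds, if and only if χ₁ > 1 and χ₂ > 1. -/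
theorem stmt_9 (χ₁ χ₂ : ℝ) (hχ₁ : 0 < χ₁) (hχ₂ : 0 < χ₂) :
    (∃ p > (1 : ℝ),
      condIp p 1 χ₁ χ₂ 1 1 1 1 1 1 ∨ condIIp p 1 χ₁ χ₂ 1 1 1 1 1 1 ∨
      condIIIp p 1 χ₁ χ₂ 1 1 1 1 1 1 ∨ condIVp p 1 χ₁ χ₂ 1 1 1 1 1 1) ↔
    (χ₁ > 1 ∧ χ₂ > 1) := by
  have D : ∀ a b c : ℝ, 0 < b → a / b < c → a < c * b := by
    intro a b c hb h; exact (div_lt_iff₀ hb).1 h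
  have E : ∀ a b c : ℝ, 0 < b → c ≤ a / b → c * b ≤ a := by
    intro a b c hb h; exact (le_div_iff₀ hb).1 h
  constructor
  · rintro ⟨p, hp, h⟩
    have hp1 : (0:ℝ) < p - 1 := by linarith
    have hp2 : (0:ℝ) < p ^ 2 - 1 := by nlinarith
    have hpA : (0:ℝ) < p * (p - 1) + (p ^ 2 - 1) := by nlinarith
    have hpB : (0:ℝ) < (p ^ 2 - 1) + p * (p - 1) := by nlinarith
    rcases h with h | h | h | h
    · simp only [condIp] at h
      norm_num at h
      obtain ⟨h1, h2⟩ := h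
      have k1 := D _ _ _ hp1 h1
      have k2 := D _ _ _ hp1 h2
      constructor <;> nlinarith
    · simp only [condIIp, max_lt_iff, gt_iff_lt] at h
      norm_num at h
      obtain ⟨⟨h1, h1'⟩, h2, h3⟩ := h
      have k1 := D _ _ _ hp1 h1'
      have k2 := D _ _ _ hpA h2
      constructor <;> nlinarith
    · simp only [condIIIp, max_lt_iff, gt_iff_lt] at h
      norm_num at h
      obtain ⟨h1, h2, h3, h3'⟩ := h
      have k1 := D _ _ _ hpB h1
      have k2 := D _ _ _ hp1 h3'
      constructor <;> nlinarith
    · simp only [condIVp, gt_iff_lt] at h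
      norm_num at h
      obtain ⟨h1, h2, h3, h4⟩ := h
      have k1 := D _ _ _ hpB h1
      have k2 := D _ _ _ hpA h3
      have k3 := E _ _ _ hp1 h2
      have k4 := E _ _ _ hp1 h4
      constructor <;> nlinarith
  · rintro ⟨h1, h2⟩
    set m := min χ₁ χ₂ with hm
    have hm1 : 1 < m := lt_min h1 h2
    have hmt : (0:ℝ) < m - 1 := by linarith
    refine ⟨m / (m - 1) + 1, ?_, Or.inl ?_⟩
    · have : 0 < m / (m - 1) := by positivity
      linarith
    · simp only [condIp]
      norm_num
      have hm0 : (0:ℝ) < m := by linarith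
      have heq : (m / (m - 1) + 1) / (m / (m - 1)) = (2 * m - 1) / m := by
        field_simp
        ring
      have hkey : (m / (m - 1) + 1) / (m / (m - 1)) < m := by
        rw [heq, div_lt_iff₀ hm0]
        nlinarith [sq_nonneg (m - 1)]
      exact ⟨lt_of_lt_of_le hkey (min_le_left _ _),
        lt_of_lt_of_le hkey (min_le_right _ _)⟩
end

section
/- Let χ̃₁, χ̃₂, χ̃₄ > 0 be real numbers, and instantiate the parameters as d₃ = β = 1, μ₁ = μ₂ = 1, a₁ = a₂ = 1, α = χ̃₂/χ̃₁, χ₁ = χ̃₁, χ₂ = χ̃₄. Then the disjunction (I) ∨ (II) ∨ (III) ∨ (IV) holds if and only if at least one of the following holds: (O1) χ̃₂ > 1, χ̃₄ > 1 and χ̃₂·χ̃₄ > χ̃₁ > 1; (O2) χ̃₁ > χ̃₂ > 1 and χ̃₄ > 2χ̃₁/(χ̃₁+χ̃₂); (O3) χ̃₂ > 1, χ̃₄ > 1, χ̃₂ > χ̃₁ and χ̃₁ + χ̃₂ > 2. Moreover, with this choice of parameters condition (IV) is never satisfied. -/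
/-- Condition (I): \eqref{condition:1}. -/
def condI (d₃ χ₁ χ₂ μ₁ μ₂ a₁ a₂ α β : ℝ) : Prop :=
  χ₁ > d₃ * μ₁ * max (1 / α) (a₁ / β) ∧ χ₂ > d₃ * μ₂ * max (1 / β) (a₂ / α)

/-- Condition (II): \eqref{condition:2}. -/
def condII (d₃ χ₁ χ₂ μ₁ μ₂ a₁ a₂ α β : ℝ) : Prop :=
  χ₁ > d₃ * μ₁ * max (1 / α) (a₁ / β) ∧ χ₂ > d₃ * μ₂ * (1 + a₂) / (α + β) ∧ a₂ / α > 1 / β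

/-- Condition (III): \eqref{condition:3}. -/
def condIII (d₃ χ₁ χ₂ μ₁ μ₂ a₁ a₂ α β : ℝ) : Prop :=
  χ₁ > d₃ * μ₁ * (1 + a₁) / (α + β) ∧ χ₂ > d₃ * μ₂ * max (1 / β) (a₂ / α) ∧ a₁ / β > 1 / α

/-- Condition (IV): \eqref{condition:4}. -/
def condIV (d₃ χ₁ χ₂ μ₁ μ₂ a₁ a₂ α β : ℝ) : Prop :=
  χ₁ > d₃ * μ₁ * (1 + a₁) / (α + β) ∧ χ₂ > d₃ * μ₂ * (1 + a₂) / (α + β) ∧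
  a₁ / β > 1 / α ∧ a₂ / α > 1 / β

theorem stmt_14 (χt₁ χt₂ χt₄ : ℝ) (hχt₁ : 0 < χt₁) (hχt₂ : 0 < χt₂) (hχt₄ : 0 < χt₄) :
    ((condI 1 χt₁ χt₄ 1 1 1 1 (χt₂ / χt₁) 1 ∨ condII 1 χt₁ χt₄ 1 1 1 1 (χt₂ / χt₁) 1 ∨
      condIII 1 χt₁ χt₄ 1 1 1 1 (χt₂ / χt₁) 1 ∨ condIV 1 χt₁ χt₄ 1 1 1 1 (χt₂ / χt₁) 1) ↔
      ((χt₂ > 1 ∧ χt₄ > 1 ∧ χt₂ * χt₄ > χt₁ ∧ χt₁ > 1) ∨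
       (χt₁ > χt₂ ∧ χt₂ > 1 ∧ χt₄ > 2 * χt₁ / (χt₁ + χt₂)) ∨
       (χt₂ > 1 ∧ χt₄ > 1 ∧ χt₂ > χt₁ ∧ χt₁ + χt₂ > 2))) ∧
    ¬ condIV 1 χt₁ χt₄ 1 1 1 1 (χt₂ / χt₁) 1 := by
  have hS : (0:ℝ) < χt₁ + χt₂ := by linarith
  have hα : (0:ℝ) < χt₂ / χt₁ + 1 := by positivity
  have e3 : ((1:ℝ) + 1) / (χt₂ / χt₁ + 1) = 2 * χt₁ / (χt₁ + χt₂) := by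
    rw [div_eq_div_iff hα.ne' hS.ne']
    field_simp
    ring
  have kAA : χt₁ / χt₂ < χt₁ ↔ 1 < χt₂ := by
    rw [div_lt_iff₀ hχt₂, lt_mul_iff_one_lt_right hχt₁]
  have kAC : χt₁ / χt₂ < χt₄ ↔ χt₁ < χt₂ * χt₄ := by
    rw [div_lt_iff₀ hχt₂, mul_comm]
  have k1 : 1 < χt₁ / χt₂ ↔ χt₂ < χt₁ := one_lt_div hχt₂
  have k1' : χt₁ / χt₂ < 1 ↔ χt₁ < χt₂ := div_lt_one hχt₂
  have kBC : 2 * χt₁ / (χt₁ + χt₂) < χt₄ ↔ 2 * χt₁ < χt₄ * (χt₁ + χt₂) :=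
    div_lt_iff₀ hS
  have kBA : 2 * χt₁ / (χt₁ + χt₂) < χt₁ ↔ 2 * χt₁ < χt₁ * (χt₁ + χt₂) := by
    rw [div_lt_iff₀ hS]
  simp only [condI, condII, condIII, condIV, one_mul, mul_one, one_div_one, div_one,
    one_div_div, gt_iff_lt, max_lt_iff, e3, kAA, kAC, k1, k1', kBC, kBA]
  constructor
  · constructor
    · rintro (⟨⟨h1, h2⟩, h3, h4⟩ | ⟨⟨h1, h2⟩, h3, h4⟩ | ⟨h1, ⟨h2, h3⟩, h4⟩ | ⟨h1, h2, h3, h4⟩)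
      · exact Or.inl ⟨h1, h3, h4, h2⟩
      · exact Or.inr (Or.inl ⟨h4, h1, h3⟩)
      · refine Or.inr (Or.inr ⟨?_, h2, h4, ?_⟩)
        · nlinarith
        · nlinarith
      · linarith
    · rintro (⟨h1, h2, h3, h4⟩ | ⟨h1, h2, h3⟩ | ⟨h1, h2, h3, h4⟩)
      · exact Or.inl ⟨⟨h1, h4⟩, h2, h3⟩
      · exact Or.inr (Or.inl ⟨⟨h2, by linarith⟩, h3, h1⟩)
      · refine Or.inr (Or.inr (Or.inl ⟨by nlinarith, ⟨h2, by nlinarith⟩, h3⟩))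
  · rintro ⟨-, -, h3, h4⟩
    linarith
end
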